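/- The family of temporal hash functions τ^k (induced by k uniform random pivots on [0,T]) is (Δ₁, Δ₂, (1-Δ₁/T)^k, (1-Δ₂/T)^k)-sensitive with respect to the time-delay distance: if the delay |t-t'| between two time points is at most Δ₁ then the collision probability is at least (1-Δ₁/T)^k, and if the delay is at least Δ₂ then the collision probability is at most (1-Δ₂/T)^k. -/

import Mathlib

/-!
A pair of time points collides exactly when every pivot avoids the interval `(min t t', max t t']`,
which has uniform mass `|t - t'| / T`. By independence of the pivots the collision probability is
therefore exactly `(1 - |t - t'| / T) ^ k`, and both bounds follow because this is antitone in the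
delay `|t - t'|`.
-/

open MeasureTheory ProbabilityTheory Set

lemma volume_cond_Icc_Ioc {l u a b : ℝ} (hlu : l < u) (hla : l ≤ a) (hbu : b ≤ u) :
    volume[Ioc a b | Icc l u] = ENNReal.ofReal ((b - a) / (u - l)) := by
  rw [cond_apply measurableSet_Icc,
    inter_eq_right.2 (Ioc_subset_Icc_self.trans (Icc_subset_Icc hla hbu)),
    Real.volume_Icc, Real.volume_Ioc, ENNReal.ofReal_div_of_pos (sub_pos.2 hlu),
    ENNReal.div_eq_inv_mul]

lemma volume_cond_Icc_compl_Ioc {l u a b : ℝ} (hlu : l < u) (hla : l ≤ a) (hab : a ≤ b)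
    (hbu : b ≤ u) :
    volume[(Ioc a b)ᶜ | Icc l u] = ENNReal.ofReal (1 - (b - a) / (u - l)) := by
  have : IsProbabilityMeasure volume[|Icc l u] :=
    cond_isProbabilityMeasure_of_finite (by simp [hlu]) (by simp)
  rw [prob_compl_eq_one_sub measurableSet_Ioc, volume_cond_Icc_Ioc hlu hla hbu,
    ENNReal.ofReal_sub _ (div_nonneg (sub_nonneg.2 hab) (sub_nonneg.2 hlu.le)),
    ENNReal.ofReal_one]

lemma MeasureTheory.Measure.pi_setOf_forall_notMem {ι α : Type*} [Fintype ι]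
    [MeasurableSpace α] (μ : Measure α) [SigmaFinite μ] (s : Set α) :
    Measure.pi (fun _ : ι => μ) {p | ∀ i, p i ∉ s} = μ sᶜ ^ Fintype.card ι := by
  have : {p : ι → α | ∀ i, p i ∉ s} = univ.pi fun _ => sᶜ := by ext; simp
  rw [this, Measure.pi_pi, Finset.prod_const, Finset.card_univ]

theorem pi_volume_cond_Icc_not_separated {ι : Type*} [Fintype ι] {l u t t' : ℝ} (hlu : l < u)
    (ht : t ∈ Icc l u) (ht' : t' ∈ Icc l u) :
    Measure.pi (fun _ : ι => volume[|Icc l u]) {p | ∀ i, p i ∉ Ioc (min t t') (max t t')} =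
      ENNReal.ofReal ((1 - |t - t'| / (u - l)) ^ Fintype.card ι) := by
  have hprob : 0 ≤ 1 - |t - t'| / (u - l) := by
    rw [sub_nonneg, div_le_one (sub_pos.2 hlu)]
    exact abs_sub_le_of_le_of_le ht.1 ht.2 ht'.1 ht'.2
  rw [Measure.pi_setOf_forall_notMem,
    volume_cond_Icc_compl_Ioc hlu (le_min ht.1 ht'.1) min_le_max (max_le ht.2 ht'.2),
    max_sub_min_eq_abs', ENNReal.ofReal_pow hprob]

lemma one_sub_div_pow_le_of_le {x y T : ℝ} (hT : 0 < T) (hxy : x ≤ y) (hyT : y ≤ T) (k : ℕ) :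
    (1 - y / T) ^ k ≤ (1 - x / T) ^ k := by
  have : 0 ≤ 1 - y / T := by rwa [sub_nonneg, div_le_one hT]
  gcongr

theorem temporal_hash_locality_sensitive_general
    (T : ℝ) (hT : 0 < T) (k : ℕ) (Δ₁ Δ₂ : ℝ)
    (hΔ₁T : Δ₁ ≤ T)
    (t t' : ℝ) (ht : t ∈ Icc (0:ℝ) T) (ht' : t' ∈ Icc (0:ℝ) T) :
    let P := Measure.pi (fun _ : Fin k =>
        (ENNReal.ofReal T)⁻¹ • volume.restrict (Icc (0:ℝ) T))
    let collide := {p : Fin k → ℝ | ∀ i, p i ∉ Ioc (min t t') (max t t')}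
    (|t - t'| ≤ Δ₁ → ENNReal.ofReal ((1 - Δ₁ / T) ^ k) ≤ P collide) ∧
    (Δ₂ ≤ |t - t'| → P collide ≤ ENNReal.ofReal ((1 - Δ₂ / T) ^ k)) := by
  intro P collide
  have hP : P = Measure.pi fun _ => volume[|Icc 0 T] := by
    simp only [P, ProbabilityTheory.cond, Real.volume_Icc, sub_zero]
  have hcollide : P collide = ENNReal.ofReal ((1 - |t - t'| / T) ^ k) := by
    have := pi_volume_cond_Icc_not_separated (ι := Fin k) hT ht ht'
    rwa [Fintype.card_fin, sub_zero, ← hP] at this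
  have hdist_le : |t - t'| ≤ T := by simpa using abs_sub_le_of_le_of_le ht.1 ht.2 ht'.1 ht'.2
  rw [hcollide]
  exact ⟨fun h => ENNReal.ofReal_le_ofReal (one_sub_div_pow_le_of_le hT h hΔ₁T k),
    fun h => ENNReal.ofReal_le_ofReal (one_sub_div_pow_le_of_le hT h hdist_le k)⟩

/-- the temporal hash family τ^k with k i.i.d. uniform pivots on
[0,T] is (Δ₁, Δ₂, (1-Δ₁/T)^k, (1-Δ₂/T)^k)-sensitive w.r.t. the time-delay
distance: collision (no pivot strictly separating the two time points) has
probability at least (1-Δ₁/T)^k when |t-t'| ≤ Δ₁, and at most (1-Δ₂/T)^k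
when |t-t'| ≥ Δ₂. -/
theorem temporal_hash_locality_sensitive
    (T : ℝ) (hT : 0 < T) (k : ℕ) (Δ₁ Δ₂ : ℝ)
    (hΔ₁ : 0 ≤ Δ₁) (hΔ₁T : Δ₁ ≤ T) (hΔ₂ : 0 ≤ Δ₂) (hΔ₂T : Δ₂ ≤ T)
    (t t' : ℝ) (ht : t ∈ Icc (0:ℝ) T) (ht' : t' ∈ Icc (0:ℝ) T) :
    let P := Measure.pi (fun _ : Fin k =>
        (ENNReal.ofReal T)⁻¹ • volume.restrict (Icc (0:ℝ) T))
    let collide := {p : Fin k → ℝ | ∀ i, p i ∉ Ioc (min t t') (max t t')}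
    (|t - t'| ≤ Δ₁ → ENNReal.ofReal ((1 - Δ₁ / T) ^ k) ≤ P collide) ∧
    (Δ₂ ≤ |t - t'| → P collide ≤ ENNReal.ofReal ((1 - Δ₂ / T) ^ k)) :=
  temporal_hash_locality_sensitive_general T hT k Δ₁ Δ₂ hΔ₁T t t' ht ht'
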